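/- The Condorcet-Plurality voting method CP satisfies immunity to spoilers on profiles with at most three alternatives: for any profile P with |X(P)| ≤ 3 and a,b ∈ X(P) with a ≠ b and |X(P)| ≥ 2, if a ∈ CP(P_{-b}), CP(P|{a,b}) = {a}, and b ∉ CP(P), then a ∈ CP(P). -/

import Mathlib

/-!
Formalization of notions from "An extension of May's Theorem to three
alternatives: axiomatizing Minimax voting" by Holliday and Pacuit.

The set of voters is the countably infinite set `ℕ`; the set `α` of
alternatives is a type (assumed to have at least three elements where the
paper assumes `|𝒳| ≥ 3`).
-/

namespace MayMinimax

/-- A profile: a finite set of voters drawn from the countably infinite set `ℕ`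
of all voters, a finite set of alternatives, and, for each voter, a binary
relation on alternatives given as a Boolean-valued function:
`P.rel i a b = true` means that voter `i` ranks `a` above `b`. -/
structure Profile (α : Type*) where
  voters : Finset ℕ
  alts : Finset α
  rel : ℕ → α → α → Bool

variable {α : Type*} [DecidableEq α]

/-- Each voter's ballot is a strict weak order (asymmetric and negatively
transitive) on the alternatives. -/
def IsSWO (P : Profile α) : Prop :=
  ∀ i ∈ P.voters,
    (∀ a ∈ P.alts, ∀ b ∈ P.alts, P.rel i a b = true → P.rel i b a = false) ∧
    (∀ a ∈ P.alts, ∀ b ∈ P.alts, ∀ c ∈ P.alts,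
      P.rel i a b = false → P.rel i b c = false → P.rel i a c = false)

/-- The margin of `a` over `b` in `P`: the number of voters ranking `a` above
`b` minus the number of voters ranking `b` above `a`. -/
def Margin (P : Profile α) (a b : α) : ℤ :=
  ((P.voters.filter fun i => P.rel i a b = true).card : ℤ) -
    ((P.voters.filter fun i => P.rel i b a = true).card : ℤ)

/-- The number of voters ranking `a` above `b` in `P`. -/
def Support (P : Profile α) (a b : α) : ℕ :=
  (P.voters.filter fun i => P.rel i a b = true).card

/-- The Minimax score of `a`: the maximum margin of any other alternative over `a`. -/
def MMScore (P : Profile α) (a : α) : ℤ :=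
  WithBot.unbotD 0 (((P.alts.erase a).image fun b => Margin P b a).max)

/-- The set of Minimax winners: alternatives with minimal Minimax score. -/
def Minimax (P : Profile α) : Finset α :=
  P.alts.filter fun a => ∀ b ∈ P.alts, MMScore P a ≤ MMScore P b

/-- Restriction of a profile to a subset `Y` of the alternatives. -/
def Profile.restrict (P : Profile α) (Y : Finset α) : Profile α where
  voters := P.voters
  alts := Y
  rel := fun i a b => P.rel i a b && decide (a ∈ Y) && decide (b ∈ Y)

/-- `P.minus b` is `P` restricted to `X(P) \ {b}`. -/
def Profile.minus (P : Profile α) (b : α) : Profile α :=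
  P.restrict (P.alts.erase b)

/-- The combination `P + Q` of two profiles (used with disjoint voter sets and
the same set of alternatives). -/
def Profile.combine (P Q : Profile α) : Profile α where
  voters := P.voters ∪ Q.voters
  alts := P.alts
  rel := fun i a b => if i ∈ P.voters then P.rel i a b else Q.rel i a b

/-- `2P`: the profile `P` together with a copy of `P` on a disjoint set of voters. -/
def Profile.double (P : Profile α) : Profile α where
  voters := P.voters ∪ P.voters.image fun i => i + (P.voters.sup id + 1)
  alts := P.alts
  rel := fun i a b =>
    if i ∈ P.voters then P.rel i a b else P.rel (i - (P.voters.sup id + 1)) a b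

/-- `r` is (the strict part of) a linear order on the finite set `X`. -/
def IsLinearOn (r : α → α → Bool) (X : Finset α) : Prop :=
  (∀ a ∈ X, r a a = false) ∧
  (∀ a ∈ X, ∀ b ∈ X, ∀ c ∈ X, r a b = true → r b c = true → r a c = true) ∧
  (∀ a ∈ X, ∀ b ∈ X, a ≠ b → (r a b = true ∨ r b a = true)) ∧
  (∀ a ∈ X, ∀ b ∈ X, r a b = true → r b a = false)

/-- `Q` is a block profile for the set `X` of alternatives: it contains, for
each linear order of `X`, exactly one voter submitting that linear order, and
no other voters. -/
def IsBlock (X : Finset α) (Q : Profile α) : Prop :=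
  Q.alts = X ∧
  (∀ i ∈ Q.voters, IsLinearOn (Q.rel i) X) ∧
  (∀ r : α → α → Bool, IsLinearOn r X →
    ∃! i, i ∈ Q.voters ∧ ∀ a ∈ X, ∀ b ∈ X, Q.rel i a b = r a b)

/-- `P'` is obtained from `P` by one voter who ranked `a` uniquely last in `P`
switching to ranking `a` uniquely first in `P'`, with the restriction of that
voter's relation to `X(P) \ {a}` unchanged and all other voters' relations
unchanged. -/
def MoveLastToFirst (P P' : Profile α) (a : α) : Prop :=
  P'.voters = P.voters ∧ P'.alts = P.alts ∧ a ∈ P.alts ∧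
  ∃ i ∈ P.voters,
    (∀ b ∈ P.alts, b ≠ a → P.rel i b a = true) ∧
    (∀ b ∈ P.alts, b ≠ a → P'.rel i a b = true) ∧
    (∀ b ∈ P.alts, b ≠ a → ∀ c ∈ P.alts, c ≠ a → P'.rel i b c = P.rel i b c) ∧
    (∀ j ∈ P.voters, j ≠ i → ∀ x ∈ P.alts, ∀ y ∈ P.alts, P'.rel j x y = P.rel j x y)

/-- `P'` is obtained from `P` by adding one new voter who ranks `a` uniquely
first, all old voters' relations being unchanged. -/
def AddTopVoter (P P' : Profile α) (a : α) : Prop :=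
  P'.alts = P.alts ∧
  ∃ j, j ∉ P.voters ∧ P'.voters = insert j P.voters ∧
    (∀ b ∈ P.alts, b ≠ a → P'.rel j a b = true) ∧
    (∀ i ∈ P.voters, ∀ x ∈ P.alts, ∀ y ∈ P.alts, P'.rel i x y = P.rel i x y)

/-- `P'` is obtained from `P` by one voter improving the position of `a` in
their ballot, while nothing else changes. -/
def ImproveFor (P P' : Profile α) (a : α) : Prop :=
  P'.voters = P.voters ∧ P'.alts = P.alts ∧
  ∃ i ∈ P.voters,
    (∃ b ∈ P.alts, b ≠ a ∧
      ((P.rel i a b = false ∧ P'.rel i a b = true) ∨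
        (P.rel i b a = true ∧ P'.rel i b a = false))) ∧
    (∀ c ∈ P.alts, c ≠ a →
      (P.rel i a c = true → P'.rel i a c = true) ∧
      (P.rel i c a = false → P'.rel i c a = false)) ∧
    (∀ c ∈ P.alts, c ≠ a → ∀ d ∈ P.alts, d ≠ a → P'.rel i c d = P.rel i c d) ∧
    (∀ j ∈ P.voters, j ≠ i → ∀ x ∈ P.alts, ∀ y ∈ P.alts, P'.rel j x y = P.rel j x y)

/-- Anonymity relative to a domain `D` of profiles. -/
def Anonymity (D : Set (Profile α)) (F : Profile α → Finset α) : Prop :=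
  ∀ P ∈ D, ∀ P' ∈ D, P.alts = P'.alts →
    (∃ π : Equiv.Perm ℕ, P.voters.image π = P'.voters ∧
      ∀ i ∈ P.voters, ∀ a ∈ P.alts, ∀ b ∈ P.alts, P.rel i a b = P'.rel (π i) a b) →
    F P = F P'

/-- Neutrality relative to a domain `D` of profiles. -/
def Neutrality (D : Set (Profile α)) (F : Profile α → Finset α) : Prop :=
  ∀ P ∈ D, ∀ P' ∈ D, P.voters = P'.voters →
    ∀ τ : Equiv.Perm α, P.alts.image τ = P'.alts →
      (∀ i ∈ P.voters, ∀ a ∈ P.alts, ∀ b ∈ P.alts, P.rel i a b = P'.rel i (τ a) (τ b)) →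
      (F P).image τ = F P'

/-- Weak positive responsiveness relative to a domain `D` of profiles. -/
def WeakPositiveResponsiveness (D : Set (Profile α)) (F : Profile α → Finset α) : Prop :=
  ∀ P ∈ D, ∀ P' ∈ D, ∀ a ∈ F P, MoveLastToFirst P P' a → F P' = {a}

/-- (Full) positive responsiveness relative to a domain `D` of profiles. -/
def PositiveResponsiveness (D : Set (Profile α)) (F : Profile α → Finset α) : Prop :=
  ∀ P ∈ D, ∀ P' ∈ D, ∀ a ∈ F P, ImproveFor P P' a → F P' = {a}

/-- Positive involvement relative to a domain `D` of profiles. -/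
def PositiveInvolvement (D : Set (Profile α)) (F : Profile α → Finset α) : Prop :=
  ∀ P ∈ D, ∀ P' ∈ D, ∀ a ∈ F P, AddTopVoter P P' a → a ∈ F P'

/-- Near immunity to spoilers relative to a domain `D` of profiles. -/
def NearImmunityToSpoilers (D : Set (Profile α)) (F : Profile α → Finset α) : Prop :=
  ∀ P ∈ D, ∀ a ∈ P.alts, ∀ b ∈ P.alts,
    P.minus b ∈ D → P.restrict {a, b} ∈ D →
    F (P.minus b) = {a} → F (P.restrict {a, b}) = {a} → b ∉ F P → a ∈ F P

/-- Immunity to spoilers relative to a domain `D` of profiles. -/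
def ImmunityToSpoilers (D : Set (Profile α)) (F : Profile α → Finset α) : Prop :=
  ∀ P ∈ D, ∀ a ∈ P.alts, ∀ b ∈ P.alts,
    P.minus b ∈ D → P.restrict {a, b} ∈ D →
    a ∈ F (P.minus b) → F (P.restrict {a, b}) = {a} → b ∉ F P → a ∈ F P

/-- (Inclusion) homogeneity relative to a domain `D` of profiles. -/
def Homogeneity (D : Set (Profile α)) (F : Profile α → Finset α) : Prop :=
  ∀ P ∈ D, P.double ∈ D ∧ F P ⊆ F P.double

/-- Block preservation relative to a domain `D` of profiles. -/
def BlockPreservation (D : Set (Profile α)) (F : Profile α → Finset α) : Prop :=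
  ∀ P ∈ D, ∀ Q ∈ D, Disjoint P.voters Q.voters → IsBlock P.alts Q →
    P.combine Q ∈ D ∧ F P ⊆ F (P.combine Q)

/-- Condorcet consistency relative to a domain `D` of profiles. -/
def CondorcetConsistent (D : Set (Profile α)) (F : Profile α → Finset α) : Prop :=
  ∀ P ∈ D, ∀ c ∈ P.alts, (∀ x ∈ P.alts, x ≠ c → 0 < Margin P c x) → F P = {c}

/-- The domain of all (strict-weak-order) profiles with exactly two alternatives. -/
def Dom2 (α : Type*) : Set (Profile α) :=
  {P | IsSWO P ∧ P.voters.Nonempty ∧ P.alts.card = 2}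

/-- The domain of all profiles with two or three alternatives. -/
def Dom23 (α : Type*) : Set (Profile α) :=
  {P | IsSWO P ∧ P.voters.Nonempty ∧ (P.alts.card = 2 ∨ P.alts.card = 3)}

/-- The domain of all profiles with at least two alternatives. -/
def DomGe2 (α : Type*) : Set (Profile α) :=
  {P | IsSWO P ∧ P.voters.Nonempty ∧ 2 ≤ P.alts.card}

/-- The domain of all profiles. -/
def DomAll (α : Type*) : Set (Profile α) :=
  {P | IsSWO P ∧ P.voters.Nonempty ∧ P.alts.Nonempty}

/-- The support-based Minimax score of `a`: the maximum of `Support P b a`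
over all `b` with a positive margin over `a` (`0` if there is no such `b`). -/
def SupportMMScore (P : Profile α) (a : α) : ℕ :=
  WithBot.unbotD 0 ((((P.alts.erase a).filter fun b => 0 < Margin P b a).image fun b =>
    Support P b a).max)

/-- Support-based Minimax: alternatives with minimal support-based Minimax score. -/
def SupportMinimax (P : Profile α) : Finset α :=
  P.alts.filter fun a => ∀ b ∈ P.alts, SupportMMScore P a ≤ SupportMMScore P b

/-- The set of weak Condorcet winners in `P`. -/
def WeakCondorcetWinners (P : Profile α) : Finset α :=
  P.alts.filter fun a => ∀ x ∈ P.alts, 0 ≤ Margin P a x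

/-- The plurality score of `a`: the number of voters ranking `a` uniquely first. -/
def PluralityScore (P : Profile α) (a : α) : ℕ :=
  (P.voters.filter fun i => ∀ b ∈ P.alts, b ≠ a → P.rel i a b = true).card

/-- The Condorcet-Plurality voting method: the weak Condorcet winners if there
are any; otherwise the alternatives with maximal plurality score. -/
def CP (P : Profile α) : Finset α :=
  if (WeakCondorcetWinners P).Nonempty then WeakCondorcetWinners P
  else P.alts.filter fun a => ∀ b ∈ P.alts, PluralityScore P b ≤ PluralityScore P a

/-- The marginal Borda score of `a`: the sum of the margins of `a` over the
alternatives. -/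
def MarginalBorda (P : Profile α) (a : α) : ℤ :=
  ∑ b ∈ P.alts, Margin P a b

/-- Minimax MB: the Minimax winners with greatest marginal Borda score. -/
def MinimaxMB (P : Profile α) : Finset α :=
  (Minimax P).filter fun a => ∀ b ∈ Minimax P, MarginalBorda P b ≤ MarginalBorda P a

/-- `P` and `P'` have the same ordinal margin graph. -/
def SameOrdinalMarginGraph (P P' : Profile α) : Prop :=
  P.alts = P'.alts ∧
  (∀ a ∈ P.alts, ∀ b ∈ P.alts, (0 < Margin P a b ↔ 0 < Margin P' a b)) ∧
  (∀ a ∈ P.alts, ∀ b ∈ P.alts, ∀ c ∈ P.alts, ∀ d ∈ P.alts,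
    (Margin P c d ≤ Margin P a b ↔ Margin P' c d ≤ Margin P' a b))

/-- Ordinal margin invariance relative to a domain `D` of profiles. -/
def OrdinalMarginInvariance (D : Set (Profile α)) (F : Profile α → Finset α) : Prop :=
  ∀ P ∈ D, ∀ P' ∈ D, SameOrdinalMarginGraph P P' → F P = F P'

/-- `P` is uniquely-weighted: distinct pairs of distinct alternatives have
distinct margins. -/
def UniquelyWeighted (P : Profile α) : Prop :=
  ∀ a ∈ P.alts, ∀ b ∈ P.alts, ∀ c ∈ P.alts, ∀ d ∈ P.alts,
    a ≠ b → c ≠ d → (a, b) ≠ (c, d) → Margin P a b ≠ Margin P c d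

/-
When at most two alternatives are on the ballot, some alternative is a weak Condorcet winner, so
CP coincides with the set of weak Condorcet winners on `P_{-b}` and on `P|{a,b}` (here the bound
`|X(P)| ≤ 3` enters). Hence `a` has a non-negative margin over every alternative other than `b`,
and over `b` itself, making `a` a weak Condorcet winner of `P`.
-/

lemma margin_restrict (P : Profile α) {Y : Finset α} {x y : α} (hx : x ∈ Y) (hy : y ∈ Y) :
    Margin (P.restrict Y) x y = Margin P x y := by
  simp [Margin, Profile.restrict, hx, hy]

omit [DecidableEq α] in
lemma margin_self (P : Profile α) (x : α) : Margin P x x = 0 :=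
  sub_self _

omit [DecidableEq α] in
lemma margin_swap (P : Profile α) (x y : α) : Margin P x y = -Margin P y x :=
  (neg_sub _ _).symm

omit [DecidableEq α] in
lemma mem_weakCondorcetWinners {P : Profile α} {a : α} :
    a ∈ WeakCondorcetWinners P ↔ a ∈ P.alts ∧ ∀ x ∈ P.alts, 0 ≤ Margin P a x :=
  Finset.mem_filter

lemma mem_weakCondorcetWinners_restrict {P : Profile α} {Y : Finset α} {a : α} :
    a ∈ WeakCondorcetWinners (P.restrict Y) ↔ a ∈ Y ∧ ∀ x ∈ Y, 0 ≤ Margin P a x := by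
  refine mem_weakCondorcetWinners.trans (and_congr_right fun ha => forall₂_congr fun x hx => ?_)
  rw [margin_restrict (Y := Y) P ha hx]

lemma weakCondorcetWinners_nonempty_of_card_le_two {P : Profile α} (hne : P.alts.Nonempty)
    (hcard : P.alts.card ≤ 2) : (WeakCondorcetWinners P).Nonempty := by
  obtain ⟨x, hx⟩ := hne
  by_cases hxwin : ∀ y ∈ P.alts, 0 ≤ Margin P x y
  · exact ⟨x, mem_weakCondorcetWinners.2 ⟨hx, hxwin⟩⟩
  obtain ⟨y, hy, hyx⟩ : ∃ y ∈ P.alts, Margin P x y < 0 := by simpa using hxwin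
  have hxy : x ≠ y := by
    rintro rfl
    simp [margin_self] at hyx
  have halts : P.alts = {x, y} :=
    (Finset.eq_of_subset_of_card_le (Finset.insert_subset hx (Finset.singleton_subset_iff.2 hy))
      (hcard.trans (Finset.card_pair hxy).ge)).symm
  refine ⟨y, mem_weakCondorcetWinners.2 ⟨hy, fun z hz => ?_⟩⟩
  rw [halts, Finset.mem_insert, Finset.mem_singleton] at hz
  rcases hz with rfl | rfl
  · rw [margin_swap]
    omega
  · rw [margin_self]

lemma cp_eq_weakCondorcetWinners_of_card_le_two {P : Profile α} (hcard : P.alts.card ≤ 2) :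
    CP P = WeakCondorcetWinners P := by
  rcases P.alts.eq_empty_or_nonempty with hempty | hne
  · simp [CP, WeakCondorcetWinners, hempty]
  · rw [CP, if_pos (weakCondorcetWinners_nonempty_of_card_le_two hne hcard)]

lemma weakCondorcetWinners_subset_cp (P : Profile α) : WeakCondorcetWinners P ⊆ CP P := by
  intro a ha
  rw [CP, if_pos ⟨a, ha⟩]
  exact ha

theorem cp_immunity_to_spoilers_three_general {α : Type*} [DecidableEq α] :
    ∀ P : Profile α, IsSWO P → P.voters.Nonempty →
      P.alts.card ≤ 3 → 2 ≤ P.alts.card →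
      ∀ a ∈ P.alts, ∀ b ∈ P.alts, a ≠ b →
        a ∈ CP (P.minus b) → CP (P.restrict {a, b}) = {a} → b ∉ CP P →
        a ∈ CP P := by
  intro P _ _ hcard _ a ha b hb _ hminus hpair _
  have hminus_card : (P.alts.erase b).card ≤ 2 := by
    rw [Finset.card_erase_of_mem hb]
    omega
  rw [Profile.minus, cp_eq_weakCondorcetWinners_of_card_le_two hminus_card,
    mem_weakCondorcetWinners_restrict] at hminus
  have hpair_win : a ∈ WeakCondorcetWinners (P.restrict {a, b}) := by
    rw [← cp_eq_weakCondorcetWinners_of_card_le_two Finset.card_le_two, hpair]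
    exact Finset.mem_singleton_self a
  have hab_margin : 0 ≤ Margin P a b :=
    (mem_weakCondorcetWinners_restrict.1 hpair_win).2 b (by simp)
  refine weakCondorcetWinners_subset_cp P (mem_weakCondorcetWinners.2 ⟨ha, fun x hx => ?_⟩)
  rcases eq_or_ne x b with rfl | hxb
  · exact hab_margin
  · exact hminus.2 x (Finset.mem_erase.2 ⟨hxb, hx⟩)

/-- Condorcet-Plurality satisfies immunity to spoilers on profiles with at
most three alternatives. -/
theorem cp_immunity_to_spoilers_three {α : Type*} [DecidableEq α]
    (hX : ∃ x y z : α, x ≠ y ∧ x ≠ z ∧ y ≠ z) :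
    ∀ P : Profile α, IsSWO P → P.voters.Nonempty →
      P.alts.card ≤ 3 → 2 ≤ P.alts.card →
      ∀ a ∈ P.alts, ∀ b ∈ P.alts, a ≠ b →
        a ∈ CP (P.minus b) → CP (P.restrict {a, b}) = {a} → b ∉ CP P →
        a ∈ CP P :=
  cp_immunity_to_spoilers_three_general

end MayMinimax
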